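/- Let f : ℝ² → ℝ be a real analytic function satisfying f(p+nq, εq) = f(p,q) for all n ∈ ℤ and ε ∈ {±1}. Then f(p,q) = f(0,q) for all (p,q), and q ↦ f(0,q) is an even function. -/

import Mathlib

/-!
Fix `p ≠ 0`. Along the points `q = p / (n + 1)` the shear by `n + 1` carries `(0, q)` to `(p, q)`,
so the analytic functions `f (p, ·)` and `f (0, ·)` agree on a sequence accumulating at `0`; by the
identity theorem they coincide. Evenness is invariance under the reflection `ε = -1`.
-/

open Filter Topology Set

lemma tendsto_div_natCast_add_one_nhdsNE_zero {𝕜 : Type*} [NormedField 𝕜] [CharZero 𝕜]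
    [NormedAlgebra ℚ 𝕜] {p : 𝕜} (hp : p ≠ 0) :
    Tendsto (fun n : ℕ => p / (n + 1)) atTop (𝓝[≠] 0) := by
  refine tendsto_nhdsWithin_iff.2 ⟨?_, .of_forall fun n => div_ne_zero hp n.cast_add_one_ne_zero⟩
  simpa [div_eq_mul_one_div p] using tendsto_one_div_add_atTop_nhds_zero_nat.const_mul p

lemma apply_div_natCast_add_one_eq_apply_zero {𝕜 β : Type*} [Field 𝕜] [CharZero 𝕜]
    {f : 𝕜 × 𝕜 → β} (hshear : ∀ (n : ℤ) (p q : 𝕜), f (p + n * q, q) = f (p, q)) (p : 𝕜) (n : ℕ) :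
    f (p, p / (n + 1)) = f (0, p / (n + 1)) := by
  have hn : (n : 𝕜) + 1 ≠ 0 := n.cast_add_one_ne_zero
  simpa [mul_div_cancel₀ p hn] using hshear (n + 1) 0 (p / (n + 1))

lemma AnalyticOnNhd.comp_prodMk_left {𝕜 E F G : Type*} [NontriviallyNormedField 𝕜]
    [NormedAddCommGroup E] [NormedSpace 𝕜 E] [NormedAddCommGroup F] [NormedSpace 𝕜 F]
    [NormedAddCommGroup G] [NormedSpace 𝕜 G] {f : E × F → G} (hf : AnalyticOnNhd 𝕜 f univ)
    (x : E) : AnalyticOnNhd 𝕜 (fun y => f (x, y)) univ := fun _ _ =>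
  (hf _ (mem_univ _)).comp (analyticAt_const.prod analyticAt_id)

theorem stmt3 (f : ℝ × ℝ → ℝ) (hf : AnalyticOnNhd ℝ f Set.univ)
    (hinv : ∀ (n : ℤ) (ε : ℝ), (ε = 1 ∨ ε = -1) →
      ∀ p q : ℝ, f (p + n * q, ε * q) = f (p, q)) :
    (∀ p q : ℝ, f (p, q) = f (0, q)) ∧ (∀ q : ℝ, f (0, -q) = f (0, q)) := by
  refine ⟨fun p q => ?_, fun q => by simpa using hinv 0 (-1) (Or.inr rfl) 0 q⟩
  rcases eq_or_ne p 0 with rfl | hp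
  · rfl
  have hshear (n : ℤ) (p q : ℝ) : f (p + n * q, q) = f (p, q) := by
    simpa using hinv n 1 (Or.inl rfl) p q
  have hagree : ∃ᶠ q in 𝓝[≠] 0, f (p, q) = f (0, q) :=
    (tendsto_div_natCast_add_one_nhdsNE_zero hp).frequently
      (.of_forall (apply_div_natCast_add_one_eq_apply_zero hshear p))
  exact congrFun ((hf.comp_prodMk_left p).eq_of_frequently_eq (hf.comp_prodMk_left 0) hagree) q
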